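/- arXiv:2301.05304 — 3 statements merged into one kernel-verified Lean document; each statement's English description precedes it below -/
import Mathlib

section
/- Define b_ν(λ) = c_ν(λ) if (ν-ρ+2)/2 is a nonnegative integer, and b_ν(λ) = λ·c_ν(λ) otherwise, where c_ν(λ) = 2^{ρ-iλ} Γ(ρ-1) Γ(iλ) / (Γ((iλ+ρ+ν)/2) Γ((iλ+ρ-ν-2)/2)). Then for ν > ρ-2, the function λ ↦ b_ν(λ) has no zeros on the real line. -/
open Filter

/-- The Harish-Chandra c-function
`c_ν(λ) = 2^(ρ-iλ) Γ(ρ-1) Γ(iλ) / (Γ((iλ+ρ+ν)/2) Γ((iλ+ρ-ν-2)/2))`. -/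
noncomputable def cfun (ρ ν : ℕ) (lam : ℝ) : ℂ :=
  2 ^ ((ρ : ℂ) - Complex.I * lam) * Complex.Gamma ((ρ : ℂ) - 1) *
      Complex.Gamma (Complex.I * lam) /
    (Complex.Gamma ((Complex.I * lam + ρ + ν) / 2) *
      Complex.Gamma ((Complex.I * lam + ρ - ν - 2) / 2))

/-- `b_ν(λ) = c_ν(λ)` if `(ν-ρ+2)/2` is a nonnegative integer, and
`b_ν(λ) = λ c_ν(λ)` otherwise. -/
noncomputable def bfun (ρ ν : ℕ) (lam : ℝ) : ℂ :=
  if Even (ν + 2 - ρ) then cfun ρ ν lam else lam * cfun ρ ν lam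



/-! At `λ ≠ 0` every argument of `Γ` in `c_ν(λ)` has nonzero imaginary part, so no factor
vanishes. At `λ = 0` the factor `Γ(iλ)` has a simple pole. If `ν + 2 - ρ = 2m`, the denominator
factor is `Γ(iλ/2 - m)`, which has a simple pole at the same point (residue `(-1)^m / m!` of `Γ`
at `-m`), and the two poles cancel. Otherwise that factor is finite and nonzero at `0`, and the
extra factor `λ` of `b_ν` cancels the pole of `Γ(iλ)`. -/

open Complex Topology

theorem tendsto_add_const_nhdsNE {G : Type*} [TopologicalSpace G] [AddGroup G] [ContinuousAdd G]
    (a b : G) : Tendsto (· + b) (𝓝[≠] a) (𝓝[≠] (a + b)) :=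
  tendsto_nhdsWithin_iff.mpr ⟨(continuous_add_const b).continuousWithinAt.tendsto,
    eventually_nhdsWithin_of_forall fun _ hz h => hz (add_right_cancel h)⟩

theorem tendsto_mul_ofReal_add_nhdsNE {c : ℂ} (hc : c ≠ 0) (a : ℂ) :
    Tendsto (fun t : ℝ => c * t + a) (𝓝[≠] 0) (𝓝[≠] a) := by
  refine tendsto_nhdsWithin_iff.mpr ⟨?_, eventually_nhdsWithin_of_forall fun t ht h => ?_⟩
  · exact (Continuous.tendsto' (by fun_prop) 0 a (by simp)).mono_left nhdsWithin_le_nhds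
  · simp_all

theorem Complex.tendsto_add_mul_Gamma_nhdsNE_neg_natCast (m : ℕ) :
    Tendsto (fun z => (z + m) * Gamma z) (𝓝[≠] (-m)) (𝓝 ((-1) ^ m / m.factorial)) := by
  induction m with
  | zero => simpa using tendsto_self_mul_Gamma_nhds_zero
  | succ m ih =>
    have hm : (-(m + 1 : ℕ) : ℂ) ≠ 0 := neg_ne_zero.mpr (Nat.cast_ne_zero.mpr m.succ_ne_zero)
    have hshift : Tendsto (fun z => (z + 1 + m) * Gamma (z + 1)) (𝓝[≠] (-(m + 1 : ℕ)))
        (𝓝 ((-1) ^ m / m.factorial)) :=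
      ih.comp (by simpa using tendsto_add_const_nhdsNE (-(m + 1 : ℕ) : ℂ) 1)
    have hinv : Tendsto (fun z : ℂ => z⁻¹) (𝓝[≠] (-(m + 1 : ℕ))) (𝓝 (-(m + 1 : ℕ))⁻¹) :=
      (continuousAt_inv₀ hm).tendsto.mono_left nhdsWithin_le_nhds
    -- `(z + (m + 1)) Γ(z) = ((z + 1) + m) Γ(z + 1) / z`
    refine ((hshift.mul hinv).congr' ?_).trans (le_of_eq ?_)
    · filter_upwards [nhdsWithin_le_nhds (eventually_ne_nhds hm)] with z hz
      rw [Gamma_add_one z hz]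
      field_simp
      push_cast
      ring
    · rw [Nat.factorial_succ, Nat.cast_mul, pow_succ]
      field_simp

theorem Complex.ne_neg_natCast_of_re_pos {s : ℂ} (hs : 0 < s.re) (m : ℕ) : s ≠ -m :=
  fun h => by simp [h] at hs; exact (Nat.cast_nonneg m).not_gt hs

theorem Complex.Gamma_ne_zero_of_im_ne_zero {s : ℂ} (hs : s.im ≠ 0) : Gamma s ≠ 0 :=
  Gamma_ne_zero fun m hm => hs (by simp [hm])

theorem Complex.Gamma_natCast_sub_one_ne_zero {ρ : ℕ} (hρ : 2 ≤ ρ) : Gamma ((ρ : ℂ) - 1) ≠ 0 :=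
  Gamma_ne_zero_of_re_pos (by simp; omega)

theorem tendsto_I_mul_mul_Gamma_I_mul :
    Tendsto (fun t : ℝ => I * t * Gamma (I * t)) (𝓝[≠] 0) (𝓝 1) :=
  tendsto_self_mul_Gamma_nhds_zero.comp (by simpa using tendsto_mul_ofReal_add_nhdsNE I_ne_zero 0)

theorem tendsto_ofReal_mul_Gamma_I_mul :
    Tendsto (fun t : ℝ => t * Gamma (I * t)) (𝓝[≠] 0) (𝓝 (-I)) := by
  have h := tendsto_I_mul_mul_Gamma_I_mul.const_mul (-I)
  rw [mul_one] at h
  refine h.congr fun t => ?_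
  linear_combination (-(t : ℂ) * Gamma (I * t)) * I_sq

theorem tendsto_Gamma_I_mul_div_Gamma_I_mul_div_two_sub (m : ℕ) :
    Tendsto (fun t : ℝ => Gamma (I * t) / Gamma (I * t / 2 - m)) (𝓝[≠] 0)
      (𝓝 ((-1) ^ m * m.factorial / 2)) := by
  have hpole : Tendsto (fun t : ℝ => (I * t / 2 - m + m) * Gamma (I * t / 2 - m)) (𝓝[≠] 0)
      (𝓝 ((-1) ^ m / m.factorial)) :=
    (tendsto_add_mul_Gamma_nhdsNE_neg_natCast m).comp <| by
      simpa [mul_div_right_comm, sub_eq_add_neg] using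
        tendsto_mul_ofReal_add_nhdsNE (div_ne_zero I_ne_zero two_ne_zero) (-m : ℂ)
  have hres : ((-1) ^ m / m.factorial : ℂ) ≠ 0 := by simp [Nat.factorial_ne_zero]
  refine ((tendsto_I_mul_mul_Gamma_I_mul.div (hpole.const_mul 2) (by simpa using hres)).congr'
    ?_).trans (le_of_eq ?_)
  · filter_upwards [self_mem_nhdsWithin] with t ht
    have ht : (t : ℂ) ≠ 0 := by exact_mod_cast ht
    simp only [Pi.div_apply, sub_add_cancel]
    field_simp
  · congr 1
    field_simp
    rw [← pow_mul, mul_comm m 2, pow_mul, neg_one_sq, one_pow, one_mul]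

noncomputable def cfunPrefactor (ρ ν : ℕ) (lam : ℝ) : ℂ :=
  2 ^ ((ρ : ℂ) - I * lam) * Gamma ((ρ : ℂ) - 1) / Gamma ((I * lam + ρ + ν) / 2)

theorem cfun_eq_cfunPrefactor_mul_div (ρ ν : ℕ) (lam : ℝ) :
    cfun ρ ν lam =
      cfunPrefactor ρ ν lam * Gamma (I * lam) / Gamma ((I * lam + ρ - ν - 2) / 2) := by
  simp only [cfun, cfunPrefactor]
  ring

theorem continuousAt_cfunPrefactor_zero {ρ ν : ℕ} (h : 0 < ρ + ν) :
    ContinuousAt (cfunPrefactor ρ ν) 0 := by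
  have hD : ∀ m : ℕ, (I * ((0 : ℝ) : ℂ) + ρ + ν) / 2 ≠ -m :=
    ne_neg_natCast_of_re_pos (by simpa using (show (0 : ℝ) < ρ + ν by exact_mod_cast h))
  unfold cfunPrefactor
  exact ContinuousAt.div (by fun_prop) ((continuousAt_Gamma _ hD).comp
    (f := fun lam : ℝ => (I * lam + ρ + ν) / 2) (by fun_prop))
    (Gamma_ne_zero hD)

theorem cfunPrefactor_zero_ne_zero {ρ ν : ℕ} (hρ : 2 ≤ ρ) : cfunPrefactor ρ ν 0 ≠ 0 := by
  unfold cfunPrefactor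
  refine div_ne_zero (mul_ne_zero (by simp) (Gamma_natCast_sub_one_ne_zero hρ))
    (Gamma_ne_zero_of_re_pos ?_)
  simp only [ofReal_zero, mul_zero, zero_add, div_ofNat_re, add_re, natCast_re]
  positivity

theorem cfun_ne_zero {ρ ν : ℕ} (hρ : 2 ≤ ρ) {lam : ℝ} (hlam : lam ≠ 0) : cfun ρ ν lam ≠ 0 := by
  rw [cfun_eq_cfunPrefactor_mul_div, cfunPrefactor]
  refine div_ne_zero (mul_ne_zero (div_ne_zero (mul_ne_zero (by simp)
    (Gamma_natCast_sub_one_ne_zero hρ)) ?_) ?_) ?_ <;>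
  exact Gamma_ne_zero_of_im_ne_zero (by simpa using hlam)

theorem bfun_of_even {ρ ν : ℕ} (h : Even (ν + 2 - ρ)) : bfun ρ ν = cfun ρ ν :=
  funext fun _ => if_pos h

theorem bfun_of_not_even {ρ ν : ℕ} (h : ¬Even (ν + 2 - ρ)) :
    bfun ρ ν = fun t => t * cfun ρ ν t :=
  funext fun _ => if_neg h

theorem bfun_ne_zero {ρ ν : ℕ} (hρ : 2 ≤ ρ) {lam : ℝ} (hlam : lam ≠ 0) : bfun ρ ν lam ≠ 0 := by
  by_cases hpar : Even (ν + 2 - ρ)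
  · rw [bfun_of_even hpar]
    exact cfun_ne_zero hρ hlam
  · rw [bfun_of_not_even hpar]
    exact mul_ne_zero (ofReal_ne_zero.mpr hlam) (cfun_ne_zero hρ hlam)

theorem tendsto_cfun_nhdsNE_zero_of_eq {ρ ν m : ℕ} (h : 0 < ρ + ν) (hm : ν + 2 = ρ + 2 * m) :
    Tendsto (cfun ρ ν) (𝓝[≠] 0)
      (𝓝 (cfunPrefactor ρ ν 0 * ((-1) ^ m * m.factorial / 2))) := by
  have hm : (ν : ℂ) + 2 = ρ + 2 * m := by exact_mod_cast hm
  have heq : cfun ρ ν = fun t : ℝ =>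
      cfunPrefactor ρ ν t * (Gamma (I * t) / Gamma (I * t / 2 - m)) := by
    ext t
    rw [cfun_eq_cfunPrefactor_mul_div, mul_div_assoc]
    congr 4
    linear_combination (-1 / 2 : ℂ) * hm
  rw [heq]
  exact ((continuousAt_cfunPrefactor_zero h).tendsto.mono_left nhdsWithin_le_nhds).mul
    (tendsto_Gamma_I_mul_div_Gamma_I_mul_div_two_sub m)

theorem ne_neg_natCast_of_not_even {ρ ν : ℕ} (hodd : ¬Even (ν + 2 - ρ)) (j : ℕ) :
    ((ρ : ℂ) - ν - 2) / 2 ≠ -j := fun h => by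
  have hjC : (ν : ℂ) + 2 = ρ + 2 * j := by linear_combination -2 * h
  have hj : ν + 2 = ρ + 2 * j := by exact_mod_cast hjC
  exact hodd ⟨j, by omega⟩

theorem tendsto_ofReal_mul_cfun_nhdsNE_zero_of_not_even {ρ ν : ℕ} (h : 0 < ρ + ν)
    (hodd : ¬Even (ν + 2 - ρ)) :
    Tendsto (fun t : ℝ => t * cfun ρ ν t) (𝓝[≠] 0)
      (𝓝 (cfunPrefactor ρ ν 0 * -I / Gamma ((ρ - ν - 2) / 2))) := by
  have hE : Tendsto (fun t : ℝ => Gamma ((I * t + ρ - ν - 2) / 2)) (𝓝[≠] 0)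
      (𝓝 (Gamma ((ρ - ν - 2) / 2))) := by
    refine (continuousAt_Gamma _ (ne_neg_natCast_of_not_even hodd)).tendsto.comp
      (f := fun t : ℝ => (I * t + ρ - ν - 2) / 2) ?_
    exact (Continuous.tendsto' (by fun_prop) 0 _ (by simp)).mono_left nhdsWithin_le_nhds
  have hprefactor : Tendsto (cfunPrefactor ρ ν) (𝓝[≠] 0) (𝓝 (cfunPrefactor ρ ν 0)) :=
    (continuousAt_cfunPrefactor_zero h).tendsto.mono_left nhdsWithin_le_nhds
  refine ((hprefactor.mul tendsto_ofReal_mul_Gamma_I_mul).div hE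
    (Gamma_ne_zero (ne_neg_natCast_of_not_even hodd))).congr fun t => ?_
  rw [Pi.div_apply, cfun_eq_cfunPrefactor_mul_div]
  ring

/-- For `ν > ρ - 2` (`ρ = 2n+1`), the function `b_ν` has no zeros on the real line:
it is nonzero at every `λ ≠ 0` and its limiting value at `λ = 0` (where the formula
is interpreted by the limit) is nonzero. -/
theorem stmt4 (n ρ ν : ℕ) (hn : 1 ≤ n) (hρ : ρ = 2 * n + 1) (hν : ρ - 2 < ν) :
    (∀ lam : ℝ, lam ≠ 0 → bfun ρ ν lam ≠ 0) ∧
      ∃ L : ℂ, L ≠ 0 ∧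
        Tendsto (fun lam : ℝ => bfun ρ ν lam) (nhdsWithin 0 {0}ᶜ) (nhds L) := by
  have hρ2 : 2 ≤ ρ := by omega
  refine ⟨fun lam hlam => bfun_ne_zero hρ2 hlam, ?_⟩
  by_cases hpar : Even (ν + 2 - ρ)
  · rw [bfun_of_even hpar]
    obtain ⟨m, hm⟩ := hpar
    refine ⟨_, ?_, tendsto_cfun_nhdsNE_zero_of_eq (by omega) (by omega : ν + 2 = ρ + 2 * m)⟩
    exact mul_ne_zero (cfunPrefactor_zero_ne_zero hρ2) (by simp [Nat.factorial_ne_zero])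
  · rw [bfun_of_not_even hpar]
    refine ⟨_, ?_, tendsto_ofReal_mul_cfun_nhdsNE_zero_of_not_even (by omega) hpar⟩
    exact div_ne_zero (mul_ne_zero (cfunPrefactor_zero_ne_zero hρ2) (neg_ne_zero.mpr I_ne_zero))
      (Gamma_ne_zero (ne_neg_natCast_of_not_even hpar))
end

section
/- There exists a constant C > 0 such that for all real λ, C^{-1}(1+λ²)^{(2ρ-5)/4} ≤ |λ c_ν(λ)|^{-1} ≤ C (1+λ²)^{(2ρ-5)/4}, where c_ν(λ) = 2^{ρ-iλ} Γ(ρ-1) Γ(iλ) / (Γ((iλ+ρ+ν)/2) Γ((iλ+ρ-ν-2)/2)), assuming (ν-ρ+2)/2 is not a nonnegative integer and ν > ρ-2. -/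
open Filter

/-!
Write `ν + 2 - ρ = 2j + 1` and `w = (iλ - (2j + 1))/2`, so that the two Gamma factors in the
denominator of `c_ν(λ)` are `Γ(w + ν + 1) = (w)_{ν+1} Γ(w)` and `Γ(w)`. Since `1 - w = w̄ + 2j + 2`,
Euler's reflection formula gives `|Γ(w)|² = π / (|(w)_{2j+2}| cosh(πλ/2))`, and it also gives
`|Γ(iλ)|² = π / (λ sinh πλ)`. Hence `|λ c_ν(λ)|²` is an explicit constant times
`(πλ/2) / tanh(πλ/2) · |(w)_{2j+2}|² / |(w)_{ν+1}|²`; each factor `|w + k|²` is comparable to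
`1 + λ²` and `x / tanh x` to `1 + |x|`, so `|λ c_ν(λ)|² ≍ (1 + λ²)^{(5 - 2ρ)/2}` for `λ ≠ 0`.
Continuity extends the two-sided bound to `λ = 0`.
-/

open Complex Filter Asymptotics Finset Topology ComplexConjugate
open scoped Real

namespace Asymptotics

variable {α : Type*}

lemma IsTheta.prod_range {𝕜 𝕜' : Type*} [NormedField 𝕜] [NormedField 𝕜'] {l : Filter α}
    {f : ℕ → α → 𝕜} {g : α → 𝕜'} (h : ∀ k, f k =Θ[l] g) (n : ℕ) :
    (fun x => ∏ k ∈ range n, f k x) =Θ[l] fun x => g x ^ n := by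
  induction n with
  | zero => simpa using isTheta_const_const (l := l) one_ne_zero (one_ne_zero (α := 𝕜'))
  | succ n ih => simpa only [prod_range_succ, pow_succ] using ih.mul (h n)

lemma IsTheta.comp_tendsto {β E F : Type*} [Norm E] [Norm F] {l : Filter α} {f : α → E}
    {g : α → F} (h : f =Θ[l] g) {k : β → α} {l' : Filter β} (hk : Tendsto k l' l) :
    (f ∘ k) =Θ[l'] (g ∘ k) :=
  ⟨h.1.comp_tendsto hk, h.2.comp_tendsto hk⟩

lemma IsBigO.top_of_principal_compl_singleton [TopologicalSpace α] {E F : Type*}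
    [SeminormedAddCommGroup E] [SeminormedAddCommGroup F] {f : α → E} {g : α → F} {a : α}
    [(𝓝[≠] a).NeBot] (h : f =O[𝓟 {a}ᶜ] g) (hf : ContinuousWithinAt f {a}ᶜ a)
    (hg : ContinuousWithinAt g {a}ᶜ a) : f =O[⊤] g := by
  obtain ⟨c, hc⟩ := isBigO_principal.1 h
  refine isBigO_top.2 ⟨c, fun x => ?_⟩
  rcases eq_or_ne x a with rfl | hx
  · exact le_of_tendsto_of_tendsto hf.norm (hg.norm.const_mul c)
      (eventually_nhdsWithin_of_forall hc)
  · exact hc x hx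

lemma IsTheta.top_of_principal_compl_singleton [TopologicalSpace α] {E F : Type*}
    [SeminormedAddCommGroup E] [SeminormedAddCommGroup F] {f : α → E} {g : α → F} {a : α}
    [(𝓝[≠] a).NeBot] (h : f =Θ[𝓟 {a}ᶜ] g) (hf : ContinuousWithinAt f {a}ᶜ a)
    (hg : ContinuousWithinAt g {a}ᶜ a) : f =Θ[⊤] g :=
  ⟨h.1.top_of_principal_compl_singleton hf hg, h.2.top_of_principal_compl_singleton hg hf⟩

lemma IsTheta.exists_pos_forall_le_and_le {E F : Type*} [SeminormedAddCommGroup E]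
    [SeminormedAddCommGroup F] {f : α → E} {g : α → F} (h : f =Θ[⊤] g) :
    ∃ C > 0, ∀ x, C⁻¹ * ‖g x‖ ≤ ‖f x‖ ∧ ‖f x‖ ≤ C * ‖g x‖ := by
  obtain ⟨c₁, hc₁, hfg⟩ := h.1.exists_pos
  obtain ⟨c₂, -, hgf⟩ := h.2.exists_pos
  have hC : 0 < max c₁ c₂ := lt_max_of_lt_left hc₁
  refine ⟨max c₁ c₂, hC, fun x => ⟨?_, ?_⟩⟩
  · rw [inv_mul_le_iff₀ hC]
    exact (isBigOWith_top.1 hgf x).trans (by gcongr; exact le_max_right _ _)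
  · exact (isBigOWith_top.1 hfg x).trans (by gcongr; exact le_max_left _ _)

end Asymptotics

namespace Real

lemma sinh_le_two_mul_mul_cosh {x : ℝ} (hx : 0 ≤ x) : sinh x ≤ 2 * x * cosh x := by
  have hexp : (1 - 2 * x) * exp x ≤ exp (-x) :=
    calc (1 - 2 * x) * exp x ≤ exp (-2 * x) * exp x := by
          gcongr; linarith [add_one_le_exp (-2 * x)]
      _ = exp (-x) := by rw [← exp_add]; ring_nf
  have hcosh : exp x ≤ 2 * cosh x := by linarith [sinh_add_cosh x, sinh_lt_cosh x]
  rw [sinh_eq]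
  nlinarith

lemma mul_cosh_le_one_add_mul_sinh {x : ℝ} (hx : 0 ≤ x) : x * cosh x ≤ (1 + x) * sinh x := by
  have : exp (-x) ≤ 1 := exp_le_one_iff.2 (neg_nonpos.2 hx)
  nlinarith [cosh_sub_sinh x, self_le_sinh_iff.2 hx]

lemma div_tanh_bounds_of_pos {x : ℝ} (hx : 0 < x) :
    (1 + x) / 3 ≤ x / tanh x ∧ x / tanh x ≤ 1 + x := by
  have hs : 0 < sinh x := sinh_pos_iff.2 hx
  rw [tanh_eq_sinh_div_cosh, div_div_eq_mul_div, le_div_iff₀ hs, div_le_iff₀ hs]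
  constructor
  · nlinarith [sinh_le_two_mul_mul_cosh hx.le, sinh_lt_cosh x]
  · linarith [mul_cosh_le_one_add_mul_sinh hx.le]

lemma div_tanh_isTheta : (fun x => x / tanh x) =Θ[𝓟 {0}ᶜ] fun x => 1 + |x| := by
  have hbounds : ∀ x ≠ 0, (1 + |x|) / 3 ≤ x / tanh x ∧ x / tanh x ≤ 1 + |x| := by
    intro x hx
    rcases hx.lt_or_gt with h | h
    · simpa [abs_of_neg h, tanh_neg, neg_div_neg_eq] using div_tanh_bounds_of_pos (neg_pos.2 h)
    · simpa [abs_of_pos h] using div_tanh_bounds_of_pos h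
  refine ⟨isBigO_principal.2 ⟨1, fun x hx => ?_⟩, isBigO_principal.2 ⟨3, fun x hx => ?_⟩⟩ <;>
  · have := hbounds x hx
    have h0 : 0 ≤ x / tanh x := by linarith [abs_nonneg x]
    rw [norm_of_nonneg h0, norm_of_nonneg (by positivity : (0 : ℝ) ≤ 1 + |x|)]
    linarith

lemma one_add_abs_mul_isTheta_sqrt {c : ℝ} (hc : c ≠ 0) :
    (fun t => 1 + |c * t|) =Θ[⊤] fun t => √(1 + t ^ 2) := by
  have hsqrt_le (t : ℝ) : √(1 + t ^ 2) ≤ 1 + |t| :=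
    sqrt_le_iff.2 ⟨by positivity, by nlinarith [sq_abs t, abs_nonneg t]⟩
  have hle_sqrt (t : ℝ) : 1 + |t| ≤ 2 * √(1 + t ^ 2) := by
    have h1 : 1 ≤ √(1 + t ^ 2) := one_le_sqrt.2 (by nlinarith [sq_nonneg t])
    have h2 : |t| ≤ √(1 + t ^ 2) := abs_le_sqrt (by linarith)
    linarith
  have hc' : 0 < |c| := abs_pos.2 hc
  refine ⟨isBigO_top.2 ⟨2 * (1 + |c|), fun t => ?_⟩, isBigO_top.2 ⟨1 + |c|⁻¹, fun t => ?_⟩⟩ <;>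
    rw [norm_of_nonneg (by positivity), norm_of_nonneg (by positivity), abs_mul]
  · nlinarith [hle_sqrt t, abs_nonneg t, sqrt_nonneg (1 + t ^ 2)]
  · have ht : |t| = |c|⁻¹ * (|c| * |t|) := by field_simp
    nlinarith [hsqrt_le t, abs_nonneg t, inv_pos.2 hc', mul_nonneg hc'.le (abs_nonneg t)]

lemma isTheta_sq_add_sq {a : ℝ} (ha : a ≠ 0) :
    (fun t => a ^ 2 + t ^ 2) =Θ[⊤] fun t => 1 + t ^ 2 := by
  have ha' : 0 < a ^ 2 := by positivity
  refine ⟨isBigO_top.2 ⟨a ^ 2 + 1, fun t => ?_⟩, isBigO_top.2 ⟨1 + (a ^ 2)⁻¹, fun t => ?_⟩⟩ <;>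
    rw [norm_of_nonneg (by positivity), norm_of_nonneg (by positivity)]
  · nlinarith [sq_nonneg t, mul_nonneg ha'.le (sq_nonneg t)]
  · have := mul_inv_cancel₀ ha'.ne'
    nlinarith [sq_nonneg t, mul_nonneg (inv_pos.2 ha').le (sq_nonneg t)]

end Real

namespace Complex

lemma Gamma_add_nat_eq_prod_mul (z : ℂ) (n : ℕ) (h : ∀ k < n, z + k ≠ 0) :
    Gamma (z + n) = (∏ k ∈ range n, (z + k)) * Gamma z := by
  induction n with
  | zero => simp
  | succ n ih =>
    rw [Nat.cast_succ, ← add_assoc, Gamma_add_one _ (h n n.lt_succ_self),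
      ih fun k hk => h k (hk.trans n.lt_succ_self), prod_range_succ]
    ring

lemma norm_Gamma_I_mul_sq {t : ℝ} (ht : t ≠ 0) :
    ‖Gamma (I * t)‖ ^ 2 = π / (t * Real.sinh (π * t)) := by
  have hsin : sin (π * (I * t)) = Real.sinh (π * t) * I := by
    rw [show (π : ℂ) * (I * t) = ((π * t : ℝ) : ℂ) * I by push_cast; ring, sin_mul_I,
      ofReal_sinh]
  have hconj : Gamma (1 - I * t) = -(I * t) * conj (Gamma (I * t)) := by
    rw [← Gamma_conj, show 1 - I * t = -(I * t) + 1 by ring, Gamma_add_one _ (by simp [ht])]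
    congr 2
    simp
  have h := congrArg norm (Gamma_mul_Gamma_one_sub (I * t))
  rw [hconj, hsin] at h
  simp only [norm_mul, norm_neg, norm_div, RCLike.norm_conj, norm_I, norm_real,
    Real.norm_eq_abs, abs_of_pos Real.pi_pos, one_mul, mul_one] at h
  have hpos : 0 < t * Real.sinh (π * t) := by
    rcases ht.lt_or_gt with ht | ht
    · exact mul_pos_of_neg_of_neg ht (Real.sinh_neg_iff.mpr (by nlinarith [Real.pi_pos]))
    · exact mul_pos ht (Real.sinh_pos_iff.mpr (by positivity))
  have habs : |t| * |Real.sinh (π * t)| = t * Real.sinh (π * t) := by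
    rw [← abs_mul, abs_of_pos hpos]
  rw [eq_div_iff (abs_ne_zero.mpr (right_ne_zero_of_mul hpos.ne'))] at h
  rw [eq_div_iff hpos.ne']
  linear_combination h - ‖Gamma (I * t)‖ ^ 2 * habs

lemma norm_Gamma_sq_eq_of_one_sub_eq (z : ℂ) (n : ℕ) (hz : 1 - z = conj z + n)
    (hn : ∀ k < n, conj z + k ≠ 0) :
    ‖Gamma z‖ ^ 2 = π / (‖∏ k ∈ range n, (z + k)‖ * ‖sin (π * z)‖) := by
  have hprod : ∏ k ∈ range n, (conj z + k) = conj (∏ k ∈ range n, (z + k)) := by simp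
  have hP : ‖∏ k ∈ range n, (z + k)‖ ≠ 0 := by
    rw [← RCLike.norm_conj, ← hprod, norm_ne_zero_iff, prod_ne_zero_iff]
    exact fun k hk => hn k (mem_range.mp hk)
  have h := congrArg norm (Gamma_mul_Gamma_one_sub z)
  rw [hz, Gamma_add_nat_eq_prod_mul _ _ hn, hprod, Gamma_conj] at h
  simp only [norm_mul, norm_div, RCLike.norm_conj, norm_real, Real.norm_eq_abs,
    abs_of_pos Real.pi_pos] at h
  rw [mul_comm, ← div_div, ← h]
  field_simp

end Complex

/-- For `ν + 2 = ρ + (2j + 1)` this is the argument `(iλ + ρ - ν - 2)/2` of the last Gamma factor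
of `cfun ρ ν λ`. -/
noncomputable def cfunArg (j : ℕ) (t : ℝ) : ℂ := (I * t - (2 * j + 1)) / 2

lemma two_mul_sub_two_mul_sub_one_ne_zero (j k : ℕ) : (2 * k - 2 * j - 1 : ℝ) ≠ 0 := by
  intro h
  have : (2 * k : ℝ) = 2 * j + 1 := by linarith
  exact absurd (by exact_mod_cast this : 2 * k = 2 * j + 1) (by omega)

lemma conj_cfunArg (j : ℕ) (t : ℝ) : conj (cfunArg j t) = cfunArg j (-t) := by
  simp [cfunArg, map_div₀, map_ofNat]

lemma one_sub_cfunArg (j : ℕ) (t : ℝ) :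
    1 - cfunArg j t = cfunArg j (-t) + (2 * j + 2 : ℕ) := by
  simp only [cfunArg]; push_cast; ring

lemma norm_cfunArg_add_nat_sq (j k : ℕ) (t : ℝ) :
    ‖cfunArg j t + k‖ ^ 2 = ((2 * k - 2 * j - 1) ^ 2 + t ^ 2) / 4 := by
  rw [Complex.sq_norm, normSq_apply]
  simp [cfunArg]
  ring

lemma cfunArg_add_nat_ne_zero (j k : ℕ) (t : ℝ) : cfunArg j t + k ≠ 0 := by
  rw [← norm_ne_zero_iff, ← pow_ne_zero_iff two_ne_zero, norm_cfunArg_add_nat_sq]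
  have := two_mul_sub_two_mul_sub_one_ne_zero j k
  positivity

lemma norm_sin_pi_mul_cfunArg (j : ℕ) (t : ℝ) :
    ‖sin (π * cfunArg j t)‖ = Real.cosh (π / 2 * t) := by
  have hπw : (π : ℂ) * cfunArg j t = ((π / 2 * t : ℝ) : ℂ) * I - π / 2 - j * π := by
    simp only [cfunArg]; push_cast; ring
  rw [hπw, sin_antiperiodic.sub_nat_mul_eq, sin_sub_pi_div_two, cos_mul_I, ← ofReal_cosh]
  simp only [norm_mul, norm_neg, norm_pow, norm_one, one_pow, one_mul, norm_real,
    Real.norm_eq_abs]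
  exact abs_of_pos (Real.cosh_pos _)

lemma norm_Gamma_cfunArg_sq (j : ℕ) (t : ℝ) :
    ‖Gamma (cfunArg j t)‖ ^ 2 =
      π / (‖∏ k ∈ range (2 * j + 2), (cfunArg j t + k)‖ * Real.cosh (π / 2 * t)) := by
  rw [norm_Gamma_sq_eq_of_one_sub_eq _ _ (by rw [conj_cfunArg, one_sub_cfunArg])
    (fun k _ => by rw [conj_cfunArg]; exact cfunArg_add_nat_ne_zero j k (-t)),
    norm_sin_pi_mul_cfunArg]

lemma norm_ofReal_mul_cfun_sq {ρ ν j : ℕ} (hρ : 2 ≤ ρ) (hj : ν + 2 = ρ + (2 * j + 1)) {t : ℝ}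
    (ht : t ≠ 0) :
    ‖(t : ℂ) * cfun ρ ν t‖ ^ 2 = 4 ^ ρ * ((ρ - 2).factorial : ℝ) ^ 2 / π ^ 2 *
      ((π / 2 * t) / Real.tanh (π / 2 * t) * ‖∏ k ∈ range (2 * j + 2), (cfunArg j t + k)‖ ^ 2 /
        ‖∏ k ∈ range (ν + 1), (cfunArg j t + k)‖ ^ 2) := by
  have hjC : (ν : ℂ) + 2 = ρ + (2 * j + 1) := by exact_mod_cast hj
  have hw : (I * t + ρ - ν - 2) / 2 = cfunArg j t := by
    rw [cfunArg]; linear_combination (-1 / 2 : ℂ) * hjC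
  have hw' : (I * t + ρ + ν) / 2 = cfunArg j t + (ν + 1 : ℕ) := by
    rw [cfunArg]; push_cast; linear_combination (-1 / 2 : ℂ) * hjC
  have hpow : ‖(2 : ℂ) ^ ((ρ : ℂ) - I * t)‖ = 2 ^ ρ := by
    rw [show (2 : ℂ) = ((2 : ℝ) : ℂ) by norm_num, norm_cpow_eq_rpow_re_of_pos two_pos]
    simp
  have hfact : Gamma ((ρ : ℂ) - 1) = (ρ - 2).factorial := by
    rw [show (ρ : ℂ) - 1 = ((ρ - 2 : ℕ) : ℂ) + 1 by push_cast [Nat.cast_sub hρ]; ring,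
      Gamma_nat_eq_factorial]
  have hsinh : Real.sinh (π * t) = 2 * Real.sinh (π / 2 * t) * Real.cosh (π / 2 * t) := by
    rw [← Real.sinh_two_mul]; ring_nf
  rw [cfun, hw, hw', Gamma_add_nat_eq_prod_mul _ _ fun k _ => cfunArg_add_nat_ne_zero j k t]
  simp only [norm_mul, norm_div, mul_pow, div_pow, hpow, hfact, norm_natCast, norm_real,
    Real.norm_eq_abs, sq_abs]
  rw [norm_Gamma_I_mul_sq ht, norm_Gamma_cfunArg_sq, Real.tanh_eq_sinh_div_cosh, hsinh]
  have hP : ‖∏ k ∈ range (2 * j + 2), (cfunArg j t + k)‖ ≠ 0 :=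
    norm_ne_zero_iff.mpr (prod_ne_zero_iff.mpr fun k _ => cfunArg_add_nat_ne_zero j k t)
  have hQ : ‖∏ k ∈ range (ν + 1), (cfunArg j t + k)‖ ≠ 0 :=
    norm_ne_zero_iff.mpr (prod_ne_zero_iff.mpr fun k _ => cfunArg_add_nat_ne_zero j k t)
  have hsinh' : Real.sinh (π / 2 * t) ≠ 0 :=
    Real.sinh_ne_zero.mpr (by simp [ht, Real.pi_ne_zero])
  have hcosh : Real.cosh (π / 2 * t) ≠ 0 := (Real.cosh_pos _).ne'
  rw [show (4 : ℝ) ^ ρ = (2 ^ ρ) ^ 2 by rw [← pow_mul, mul_comm, pow_mul]; norm_num]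
  field_simp

lemma norm_prod_cfunArg_add_nat_sq_isTheta (j n : ℕ) :
    (fun t => ‖∏ k ∈ range n, (cfunArg j t + k)‖ ^ 2) =Θ[⊤] fun t => (1 + t ^ 2) ^ n := by
  simp_rw [norm_prod, ← prod_pow, norm_cfunArg_add_nat_sq, div_eq_inv_mul]
  exact IsTheta.prod_range (fun k => (Real.isTheta_sq_add_sq
    (two_mul_sub_two_mul_sub_one_ne_zero j k)).const_mul_left (by norm_num)) n

lemma norm_ofReal_mul_cfun_isTheta {ρ ν j : ℕ} (hρ : 2 ≤ ρ) (hj : ν + 2 = ρ + (2 * j + 1)) :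
    (fun t : ℝ => ‖(t : ℂ) * cfun ρ ν t‖) =Θ[𝓟 {0}ᶜ]
      fun t => (1 + t ^ 2) ^ ((5 - 2 * ρ) / 4 : ℝ) := by
  have hK : (4 ^ ρ * ((ρ - 2).factorial : ℝ) ^ 2 / π ^ 2) ≠ 0 := by positivity
  have htanh : (fun t : ℝ => (π / 2 * t) / Real.tanh (π / 2 * t)) =Θ[𝓟 {0}ᶜ]
      fun t => √(1 + t ^ 2) :=
    have hk : Tendsto (fun t : ℝ => π / 2 * t) (𝓟 {0}ᶜ) (𝓟 {0}ᶜ) :=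
      tendsto_principal_principal.2 fun t ht => by simpa [Real.pi_ne_zero] using ht
    (Real.div_tanh_isTheta.comp_tendsto hk).trans
      ((Real.one_add_abs_mul_isTheta_sqrt (by positivity)).mono le_top)
  have hsq : (fun t : ℝ => ‖(t : ℂ) * cfun ρ ν t‖ ^ 2) =Θ[𝓟 {0}ᶜ]
      fun t => √(1 + t ^ 2) * (1 + t ^ 2) ^ (2 * j + 2) / (1 + t ^ 2) ^ (ν + 1) :=
    calc _ =ᶠ[𝓟 {0}ᶜ] _ := eventuallyEq_principal.2 fun t ht => norm_ofReal_mul_cfun_sq hρ hj ht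
      _ =Θ[𝓟 {0}ᶜ] _ := ((htanh.mul ((norm_prod_cfunArg_add_nat_sq_isTheta j _).mono le_top)).div
          ((norm_prod_cfunArg_add_nat_sq_isTheta j _).mono le_top)).const_mul_left hK
  have hpow : (fun t : ℝ => √(1 + t ^ 2) * (1 + t ^ 2) ^ (2 * j + 2) / (1 + t ^ 2) ^ (ν + 1)) =
      fun t => ((1 + t ^ 2) ^ ((5 - 2 * ρ) / 4 : ℝ)) ^ 2 := by
    funext t
    generalize hr' : 1 + t ^ 2 = r
    have hr : 0 < r := hr' ▸ by positivity
    rw [Real.sqrt_eq_rpow, ← Real.rpow_natCast, ← Real.rpow_natCast, ← Real.rpow_add hr,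
      ← Real.rpow_sub hr, ← Real.rpow_natCast, ← Real.rpow_mul hr.le]
    have hjR : (ν : ℝ) + 2 = ρ + (2 * j + 1) := by exact_mod_cast hj
    congr 1
    push_cast
    linarith
  rw [hpow] at hsq
  exact ⟨IsBigO.of_pow two_ne_zero hsq.1, IsBigO.of_pow two_ne_zero hsq.2⟩

theorem stmt7_general (ρ ν : ℕ) (hρ : 3 ≤ ρ)
    (hodd : ¬ Even (ν + 2 - ρ)) (b : ℝ → ℂ)
    (hb : ∀ lam : ℝ, lam ≠ 0 → b lam = lam * cfun ρ ν lam)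
    (hb0 : Tendsto (fun lam : ℝ => (lam : ℂ) * cfun ρ ν lam)
      (nhdsWithin 0 {0}ᶜ) (nhds (b 0))) :
    ∃ C > (0:ℝ), ∀ lam : ℝ,
      C⁻¹ * (1 + lam ^ 2) ^ ((2 * (ρ:ℝ) - 5) / 4) ≤ ‖b lam‖⁻¹ ∧
        ‖b lam‖⁻¹ ≤ C * (1 + lam ^ 2) ^ ((2 * (ρ:ℝ) - 5) / 4) := by
  obtain ⟨j, hj⟩ : ∃ j, ν + 2 = ρ + (2 * j + 1) := by
    obtain ⟨j, hj⟩ := Nat.not_even_iff_odd.1 hodd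
    exact ⟨j, by omega⟩
  have hbeq : (fun t : ℝ => (t : ℂ) * cfun ρ ν t) =ᶠ[𝓟 {0}ᶜ] b :=
    eventuallyEq_principal.2 fun t ht => (hb t ht).symm
  have hΘ' : b =Θ[𝓟 {0}ᶜ] fun t : ℝ => (1 + t ^ 2) ^ ((5 - 2 * ρ) / 4 : ℝ) :=
    hbeq.symm.trans_isTheta (norm_ofReal_mul_cfun_isTheta (by omega) hj).of_norm_left
  have hΘ : b =Θ[⊤] fun t : ℝ => (1 + t ^ 2) ^ ((5 - 2 * ρ) / 4 : ℝ) :=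
    hΘ'.top_of_principal_compl_singleton
      (hb0.congr' (hbeq.filter_mono (le_principal_iff.2 self_mem_nhdsWithin)))
      (by fun_prop (disch := norm_num))
  obtain ⟨C, hC, hbound⟩ := hΘ.inv.exists_pos_forall_le_and_le
  refine ⟨C, hC, fun t => ?_⟩
  have hr : 0 < 1 + t ^ 2 := by positivity
  have hexp : ((1 + t ^ 2) ^ ((5 - 2 * ρ) / 4 : ℝ))⁻¹ = (1 + t ^ 2) ^ ((2 * ρ - 5) / 4 : ℝ) := by
    rw [← Real.rpow_neg hr.le]; ring_nf
  simpa only [Pi.inv_apply, norm_inv, hexp, Real.norm_of_nonneg (Real.rpow_nonneg hr.le _)]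
    using hbound t

/-- For `ν > ρ-2` with `(ν-ρ+2)/2` not a nonnegative integer, there is `C > 0` with
`C⁻¹(1+λ²)^((2ρ-5)/4) ≤ |λ c_ν(λ)|⁻¹ ≤ C (1+λ²)^((2ρ-5)/4)` for all real `λ`
(the function `b(λ) = λ c_ν(λ)` being given at `λ = 0` by its limiting value). -/
theorem stmt7 (ρ ν : ℕ) (hρ : 3 ≤ ρ) (hν : ρ - 2 < ν)
    (hodd : ¬ Even (ν + 2 - ρ)) (b : ℝ → ℂ)
    (hb : ∀ lam : ℝ, lam ≠ 0 → b lam = lam * cfun ρ ν lam)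
    (hb0 : Tendsto (fun lam : ℝ => (lam : ℂ) * cfun ρ ν lam)
      (nhdsWithin 0 {0}ᶜ) (nhds (b 0))) :
    ∃ C > (0:ℝ), ∀ lam : ℝ,
      C⁻¹ * (1 + lam ^ 2) ^ ((2 * (ρ:ℝ) - 5) / 4) ≤ ‖b lam‖⁻¹ ∧
        ‖b lam‖⁻¹ ≤ C * (1 + lam ^ 2) ^ ((2 * (ρ:ℝ) - 5) / 4) :=
  stmt7_general ρ ν hρ hodd b hb hb0
end

section
/- For g ∈ Sp(n,1), k ∈ K = Sp(n)×Sp(1), and t ≥ 0, one has 0 ≤ A⁺(g⁻¹ k exp(tH)) - H(g⁻¹ k exp(tH)) ≤ ((1+|g·0|)/(1-|g·0|)) e^{-2t}, where |g·0| < 1 is the norm of the image of the origin under the fractional linear action of g on the unit ball in ℍⁿ. -/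
open Matrix

noncomputable section

/-- The quadratic form matrix `J = diag(1,…,1,-1)` over the quaternions. -/
def Jm (n : ℕ) : Matrix (Fin (n+1)) (Fin (n+1)) (Quaternion ℝ) :=
  Matrix.diagonal fun i => if i = Fin.last n then (-1 : Quaternion ℝ) else 1

/-- The group `Sp(n,1)` of quaternionic matrices preserving `Σ|u_j|² - |u_{n+1}|²`. -/
def SpGrp (n : ℕ) : Set (Matrix (Fin (n+1)) (Fin (n+1)) (Quaternion ℝ)) :=
  {g | gᴴ * Jm n * g = Jm n}

/-- The maximal compact subgroup `K = Sp(n) × Sp(1)`: block diagonal elements. -/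
def inK (n : ℕ) (k : Matrix (Fin (n+1)) (Fin (n+1)) (Quaternion ℝ)) : Prop :=
  k ∈ SpGrp n ∧ ∀ i : Fin (n+1), i ≠ Fin.last n →
    k i (Fin.last n) = 0 ∧ k (Fin.last n) i = 0

/-- The Cartan subgroup element `a_t = exp(tH)`. -/
def atm (n : ℕ) (t : ℝ) : Matrix (Fin (n+1)) (Fin (n+1)) (Quaternion ℝ) :=
  Matrix.of fun i j =>
    if (i = 0 ∧ j = 0) ∨ (i = Fin.last n ∧ j = Fin.last n) then
      algebraMap ℝ (Quaternion ℝ) (Real.cosh t)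
    else if (i = 0 ∧ j = Fin.last n) ∨ (i = Fin.last n ∧ j = 0) then
      algebraMap ℝ (Quaternion ℝ) (Real.sinh t)
    else if i = j then 1 else 0

/-- The null vector `v₊ = (e₁, 1)ᵗ`, fixed by the Iwasawa nilpotent group `N`. -/
def vplus (n : ℕ) : Fin (n+1) → Quaternion ℝ :=
  fun i => if i = 0 ∨ i = Fin.last n then 1 else 0

/-- The Cartan radial component `A⁺(g) = arcosh |d|`, where `d` is the bottom-right
entry of `g` (so `cosh A⁺(g) = |d|`). -/
def Aplus (n : ℕ) (g : Matrix (Fin (n+1)) (Fin (n+1)) (Quaternion ℝ)) : ℝ :=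
  Real.log (‖g (Fin.last n) (Fin.last n)‖ +
    Real.sqrt (‖g (Fin.last n) (Fin.last n)‖ ^ 2 - 1))

/-- The Iwasawa component `H(g) = log |c e₁ + d|`. -/
def Hiw (n : ℕ) (g : Matrix (Fin (n+1)) (Fin (n+1)) (Quaternion ℝ)) : ℝ :=
  Real.log ‖g (Fin.last n) 0 + g (Fin.last n) (Fin.last n)‖

/-- The norm `|g·0|` of the image of the origin of the unit ball `B(ℍⁿ)` under the
fractional linear action of `g = [[a,b],[c,d]]`, namely `g·0 = b d⁻¹`. -/
def normg0 (n : ℕ) (g : Matrix (Fin (n+1)) (Fin (n+1)) (Quaternion ℝ)) : ℝ :=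
  Real.sqrt (∑ i : Fin n,
    ‖g (Fin.castSucc i) (Fin.last n) * (g (Fin.last n) (Fin.last n))⁻¹‖ ^ 2)

/-! The last row of `g⁻¹ k aₜ` is `(C, D) = (sinh t • A - cosh t • S, cosh t • A - sinh t • S)`,
where `A = d̄ κ` has norm `|d|` and, by Cauchy–Schwarz and the column relation `|b|² = |d|² - 1`
of `Sp(n,1)`, `|S| ≤ |g·0| |d|`. This boost preserves `|D|² - |C|² = |A|² - |S|² ≥ 1`,
so `e^H = |C + D| ≤ |D| + √(|D|² - 1) = e^{A⁺}`. Conversely `C + D = eᵗ (A - S)` and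
`2D = eᵗ (A - S) + e⁻ᵗ (A + S)`, so `e^{A⁺} ≤ 2|D|` exceeds `e^H` by at most `e⁻ᵗ |A + S|`,
and `log (1 + x) ≤ x` gives the bound. -/

open Quaternion Real

lemma norm_sum_star_mul_le {ι R : Type*} [NormedRing R] [StarRing R] [NormedStarGroup R]
    (s : Finset ι) (x y : ι → R) :
    ‖∑ i ∈ s, star (x i) * y i‖ ≤ √(∑ i ∈ s, ‖x i‖ ^ 2) * √(∑ i ∈ s, ‖y i‖ ^ 2) :=
  calc ‖∑ i ∈ s, star (x i) * y i‖ ≤ ∑ i ∈ s, ‖x i‖ * ‖y i‖ :=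
        (norm_sum_le _ _).trans (Finset.sum_le_sum fun i _ => by
          simpa only [_root_.norm_star] using norm_mul_le (star (x i)) (y i))
    _ ≤ _ := Real.sum_mul_le_sqrt_mul_sqrt _ _ _

lemma norm_add_le_add_sqrt {F : Type*} [SeminormedAddCommGroup F] {C D : F}
    (h : ‖C‖ ^ 2 + 1 ≤ ‖D‖ ^ 2) : ‖C + D‖ ≤ ‖D‖ + √(‖D‖ ^ 2 - 1) := by
  have hC : ‖C‖ ≤ √(‖D‖ ^ 2 - 1) := Real.le_sqrt_of_sq_le (by linarith)
  linarith [norm_add_le C D]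

lemma arcosh_sub_log_le {x a b : ℝ} (ha : 0 < a) (hx : 1 ≤ x) (h : 2 * x ≤ a + b) :
    arcosh x - log a ≤ b / a := by
  have hsqrt : √(x ^ 2 - 1) ≤ x := Real.sqrt_le_iff.2 ⟨by linarith, by linarith⟩
  have harcosh : arcosh x ≤ log (a + b) :=
    log_le_log (by linarith [Real.sqrt_nonneg (x ^ 2 - 1)]) (by linarith)
  have hlog : log (a + b) - log a ≤ b / a := by
    rw [← log_div (by linarith) ha.ne']
    calc log ((a + b) / a) ≤ (a + b) / a - 1 := log_le_sub_one_of_pos (div_pos (by linarith) ha)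
      _ = b / a := by field_simp; ring
  linarith

section Boost

variable {E : Type*} [NormedAddCommGroup E] [InnerProductSpace ℝ E]

lemma norm_smul_sub_smul_sq_sub (A S : E) (c s : ℝ) :
    ‖c • A - s • S‖ ^ 2 - ‖s • A - c • S‖ ^ 2 = (c ^ 2 - s ^ 2) * (‖A‖ ^ 2 - ‖S‖ ^ 2) := by
  simp only [norm_sub_sq_real, norm_smul, inner_smul_left, inner_smul_right, mul_pow,
    Real.norm_eq_abs, sq_abs, RCLike.conj_to_real]
  ring

variable (A S : E) (t : ℝ)

lemma boost_add :
    (sinh t • A - cosh t • S) + (cosh t • A - sinh t • S) = exp t • (A - S) := by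
  rw [← cosh_add_sinh]; module

lemma two_smul_boost :
    (2 : ℝ) • (cosh t • A - sinh t • S) = exp t • (A - S) + exp (-t) • (A + S) := by
  rw [← cosh_add_sinh, ← cosh_sub_sinh]; module

variable {A S}

lemma norm_boost_sq_add_one_le (h : 1 ≤ ‖A‖ ^ 2 - ‖S‖ ^ 2) :
    ‖sinh t • A - cosh t • S‖ ^ 2 + 1 ≤ ‖cosh t • A - sinh t • S‖ ^ 2 := by
  have := norm_smul_sub_smul_sq_sub A S (cosh t) (sinh t)
  rw [cosh_sq_sub_sinh_sq, one_mul] at this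
  linarith

lemma norm_boost_add :
    ‖(sinh t • A - cosh t • S) + (cosh t • A - sinh t • S)‖ = exp t * ‖A - S‖ := by
  rw [boost_add, norm_smul, Real.norm_of_nonneg (exp_pos t).le]

lemma log_norm_boost_add_le_arcosh (h : 1 ≤ ‖A‖ ^ 2 - ‖S‖ ^ 2) :
    log ‖(sinh t • A - cosh t • S) + (cosh t • A - sinh t • S)‖ ≤
      arcosh ‖cosh t • A - sinh t • S‖ := by
  have hAS : ‖S‖ < ‖A‖ := by nlinarith [norm_nonneg A, norm_nonneg S]
  have hpos : 0 < exp t * ‖A - S‖ := mul_pos (exp_pos t) (by linarith [norm_sub_norm_le A S])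
  rw [← norm_boost_add t] at hpos
  exact log_le_log hpos (norm_add_le_add_sqrt (norm_boost_sq_add_one_le t h))

lemma arcosh_norm_boost_sub_log_le {r : ℝ} (h : 1 ≤ ‖A‖ ^ 2 - ‖S‖ ^ 2)
    (hSA : ‖S‖ ≤ r * ‖A‖) (hr : r < 1) :
    arcosh ‖cosh t • A - sinh t • S‖ -
        log ‖(sinh t • A - cosh t • S) + (cosh t • A - sinh t • S)‖ ≤
      (1 + r) / (1 - r) * exp (-2 * t) := by
  have hA : 0 < ‖A‖ := by nlinarith [norm_nonneg A, norm_nonneg S]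
  have hsub : (1 - r) * ‖A‖ ≤ ‖A - S‖ := by linarith [norm_sub_norm_le A S]
  have hadd : ‖A + S‖ ≤ (1 + r) * ‖A‖ := by linarith [norm_add_le A S]
  have hsub_pos : 0 < ‖A - S‖ := lt_of_lt_of_le (by nlinarith) hsub
  have hD : 1 ≤ ‖cosh t • A - sinh t • S‖ := by
    nlinarith [norm_boost_sq_add_one_le t h, norm_nonneg (cosh t • A - sinh t • S),
      sq_nonneg ‖sinh t • A - cosh t • S‖]
  have htwo : 2 * ‖cosh t • A - sinh t • S‖ ≤ exp t * ‖A - S‖ + exp (-t) * ‖A + S‖ := by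
    have := norm_add_le (exp t • (A - S)) (exp (-t) • (A + S))
    rwa [← two_smul_boost, norm_smul, norm_smul, norm_smul, Real.norm_two,
      Real.norm_of_nonneg (exp_pos t).le, Real.norm_of_nonneg (exp_pos _).le] at this
  rw [norm_boost_add t]
  refine (arcosh_sub_log_le (mul_pos (exp_pos t) hsub_pos) hD htwo).trans ?_
  calc exp (-t) * ‖A + S‖ / (exp t * ‖A - S‖) = ‖A + S‖ / ‖A - S‖ * exp (-2 * t) := by
        rw [show -2 * t = -t - t by ring, exp_sub]; field_simp
    _ ≤ (1 + r) / (1 - r) * exp (-2 * t) := by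
        refine mul_le_mul_of_nonneg_right ?_ (exp_pos _).le
        have hr0 : 0 ≤ r := nonneg_of_mul_nonneg_left ((norm_nonneg S).trans hSA) hA
        rw [div_le_div_iff₀ hsub_pos (by linarith)]
        nlinarith

end Boost

lemma conjTranspose_mul_Jm_mul_apply {n : ℕ} (g : Matrix (Fin (n+1)) (Fin (n+1)) (Quaternion ℝ))
    (p q : Fin (n+1)) :
    (gᴴ * Jm n * g) p q =
      ∑ i : Fin n, star (g i.castSucc p) * g i.castSucc q -
        star (g (Fin.last n) p) * g (Fin.last n) q := by
  rw [mul_apply, Fin.sum_univ_castSucc]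
  simp [Jm, mul_diagonal, Fin.castSucc_ne_last, sub_eq_add_neg]

lemma SpGrp.sum_norm_sq_sub {n : ℕ} {g : Matrix (Fin (n+1)) (Fin (n+1)) (Quaternion ℝ)}
    (hg : g ∈ SpGrp n) (p : Fin (n+1)) :
    ∑ i : Fin n, ‖g i.castSucc p‖ ^ 2 - ‖g (Fin.last n) p‖ ^ 2 =
      if p = Fin.last n then -1 else 1 := by
  have h := congrFun (congrFun hg p) p
  rw [conjTranspose_mul_Jm_mul_apply] at h
  simp only [star_mul_self, normSq_eq_norm_mul_self, ← sq, ← Quaternion.algebraMap_def,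
    ← map_sum, ← map_sub] at h
  apply (algebraMap ℝ (Quaternion ℝ)).injective
  rw [h]
  split_ifs <;> simp [Jm, *]

lemma SpGrp.sum_norm_sq_col_last {n : ℕ} {g : Matrix (Fin (n+1)) (Fin (n+1)) (Quaternion ℝ)}
    (hg : g ∈ SpGrp n) :
    ∑ i : Fin n, ‖g i.castSucc (Fin.last n)‖ ^ 2 = ‖g (Fin.last n) (Fin.last n)‖ ^ 2 - 1 := by
  have h := SpGrp.sum_norm_sq_sub hg (Fin.last n)
  rw [if_pos rfl] at h
  linarith

lemma inK.sum_norm_sq_col {n : ℕ} {k : Matrix (Fin (n+1)) (Fin (n+1)) (Quaternion ℝ)}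
    (hk : inK n k) {p : Fin (n+1)} (hp : p ≠ Fin.last n) :
    ∑ i : Fin n, ‖k i.castSucc p‖ ^ 2 = 1 := by
  simpa [(hk.2 p hp).2, hp] using SpGrp.sum_norm_sq_sub hk.1 p

lemma inK.norm_corner {n : ℕ} {k : Matrix (Fin (n+1)) (Fin (n+1)) (Quaternion ℝ)}
    (hk : inK n k) : ‖k (Fin.last n) (Fin.last n)‖ = 1 := by
  have h := SpGrp.sum_norm_sq_sub hk.1 (Fin.last n)
  simp only [fun i : Fin n => (hk.2 i.castSucc (Fin.castSucc_ne_last i)).1, norm_zero] at h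
  exact (pow_eq_one_iff_of_nonneg (norm_nonneg _) two_ne_zero).1 (by simpa using h)

lemma normg0_eq_sqrt_div (n : ℕ) (g : Matrix (Fin (n+1)) (Fin (n+1)) (Quaternion ℝ)) :
    normg0 n g =
      √(∑ i : Fin n, ‖g i.castSucc (Fin.last n)‖ ^ 2) / ‖g (Fin.last n) (Fin.last n)‖ := by
  simp only [normg0, ← div_eq_mul_inv, norm_div, div_pow, ← Finset.sum_div]
  rw [Real.sqrt_div' _ (sq_nonneg _), Real.sqrt_sq (norm_nonneg _)]

lemma Jm_mul_conjTranspose_mul_Jm_apply_last {n : ℕ}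
    (g : Matrix (Fin (n+1)) (Fin (n+1)) (Quaternion ℝ)) (j : Fin (n+1)) :
    (Jm n * gᴴ * Jm n) (Fin.last n) j =
      if j = Fin.last n then star (g (Fin.last n) (Fin.last n)) else -star (g j (Fin.last n)) := by
  by_cases h : j = Fin.last n
  · subst h; simp [Jm, mul_diagonal, diagonal_mul]
  · simp [Jm, mul_diagonal, diagonal_mul, h]

lemma mul_atm_apply_zero {n : ℕ} (h0 : (0 : Fin (n+1)) ≠ Fin.last n)
    (M : Matrix (Fin (n+1)) (Fin (n+1)) (Quaternion ℝ)) (t : ℝ) (i : Fin (n+1)) :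
    (M * atm n t) i 0 = cosh t • M i 0 + sinh t • M i (Fin.last n) := by
  rw [mul_apply, Fintype.sum_eq_add 0 (Fin.last n) h0]
  · simp [atm, h0, h0.symm, Quaternion.mul_coe_eq_smul]
  · rintro j ⟨hj0, hjl⟩
    simp [atm, hj0, hjl]

lemma mul_atm_apply_last {n : ℕ} (h0 : (0 : Fin (n+1)) ≠ Fin.last n)
    (M : Matrix (Fin (n+1)) (Fin (n+1)) (Quaternion ℝ)) (t : ℝ) (i : Fin (n+1)) :
    (M * atm n t) i (Fin.last n) = sinh t • M i 0 + cosh t • M i (Fin.last n) := by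
  rw [mul_apply, Fintype.sum_eq_add 0 (Fin.last n) h0]
  · simp [atm, h0, h0.symm, Quaternion.mul_coe_eq_smul]
  · rintro j ⟨hj0, hjl⟩
    simp [atm, hj0, hjl]

lemma Jm_mul_conjTranspose_mul_Jm_mul_apply_last_of_ne {n : ℕ}
    (g : Matrix (Fin (n+1)) (Fin (n+1)) (Quaternion ℝ))
    {k : Matrix (Fin (n+1)) (Fin (n+1)) (Quaternion ℝ)} (hk : inK n k)
    {p : Fin (n+1)} (hp : p ≠ Fin.last n) :
    (Jm n * gᴴ * Jm n * k) (Fin.last n) p =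
      -∑ i : Fin n, star (g i.castSucc (Fin.last n)) * k i.castSucc p := by
  simp [mul_apply (M := Jm n * gᴴ * Jm n), Fin.sum_univ_castSucc,
    Jm_mul_conjTranspose_mul_Jm_apply_last, Fin.castSucc_ne_last, (hk.2 p hp).2]

lemma Jm_mul_conjTranspose_mul_Jm_mul_apply_last_last {n : ℕ}
    (g : Matrix (Fin (n+1)) (Fin (n+1)) (Quaternion ℝ))
    {k : Matrix (Fin (n+1)) (Fin (n+1)) (Quaternion ℝ)} (hk : inK n k) :
    (Jm n * gᴴ * Jm n * k) (Fin.last n) (Fin.last n) =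
      star (g (Fin.last n) (Fin.last n)) * k (Fin.last n) (Fin.last n) := by
  simp [mul_apply (M := Jm n * gᴴ * Jm n), Fin.sum_univ_castSucc,
    Jm_mul_conjTranspose_mul_Jm_apply_last, Fin.castSucc_ne_last,
    fun i : Fin n => (hk.2 i.castSucc (Fin.castSucc_ne_last i)).1]

theorem stmt11_general (n : ℕ) (hn : 1 ≤ n)
    (g : Matrix (Fin (n+1)) (Fin (n+1)) (Quaternion ℝ)) (hg : g ∈ SpGrp n)
    (k : Matrix (Fin (n+1)) (Fin (n+1)) (Quaternion ℝ)) (hk : inK n k)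
    (t : ℝ) :
    0 ≤ Aplus n (Jm n * gᴴ * Jm n * k * atm n t) -
        Hiw n (Jm n * gᴴ * Jm n * k * atm n t) ∧
      Aplus n (Jm n * gᴴ * Jm n * k * atm n t) -
          Hiw n (Jm n * gᴴ * Jm n * k * atm n t) ≤
        ((1 + normg0 n g) / (1 - normg0 n g)) * Real.exp (-2 * t) := by
  have h0 : (0 : Fin (n+1)) ≠ Fin.last n := fun h => by simp [Fin.ext_iff] at h; omega
  set A := star (g (Fin.last n) (Fin.last n)) * k (Fin.last n) (Fin.last n)
  set S := ∑ i : Fin n, star (g i.castSucc (Fin.last n)) * k i.castSucc 0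
  set δ := ‖g (Fin.last n) (Fin.last n)‖
  have hG0 : (Jm n * gᴴ * Jm n * k * atm n t) (Fin.last n) 0 = sinh t • A - cosh t • S := by
    rw [mul_atm_apply_zero h0, Jm_mul_conjTranspose_mul_Jm_mul_apply_last_of_ne g hk h0,
      Jm_mul_conjTranspose_mul_Jm_mul_apply_last_last g hk]
    module
  have hGl : (Jm n * gᴴ * Jm n * k * atm n t) (Fin.last n) (Fin.last n) =
      cosh t • A - sinh t • S := by
    rw [mul_atm_apply_last h0, Jm_mul_conjTranspose_mul_Jm_mul_apply_last_of_ne g hk h0,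
      Jm_mul_conjTranspose_mul_Jm_mul_apply_last_last g hk]
    module
  have hA : ‖A‖ = δ := by rw [norm_mul, norm_star, hk.norm_corner, mul_one]
  have hcol := SpGrp.sum_norm_sq_col_last hg
  have hδ : 1 ≤ δ := by
    have : 0 ≤ δ ^ 2 - 1 := hcol ▸ Finset.sum_nonneg fun i _ => sq_nonneg _
    nlinarith [norm_nonneg (g (Fin.last n) (Fin.last n))]
  have hS : ‖S‖ ≤ √(δ ^ 2 - 1) := by
    simpa [hcol, hk.sum_norm_sq_col h0] using norm_sum_star_mul_le Finset.univ
      (fun i : Fin n => g i.castSucc (Fin.last n)) (fun i => k i.castSucc 0)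
  have hr : normg0 n g = √(δ ^ 2 - 1) / δ := by rw [normg0_eq_sqrt_div, hcol]
  have hsq : √(δ ^ 2 - 1) ^ 2 = δ ^ 2 - 1 := Real.sq_sqrt (by nlinarith)
  have h1 : 1 ≤ ‖A‖ ^ 2 - ‖S‖ ^ 2 := by
    rw [hA]; nlinarith [norm_nonneg S]
  have hSA : ‖S‖ ≤ normg0 n g * ‖A‖ := by
    rwa [hr, hA, div_mul_cancel₀ _ (by positivity)]
  have hr1 : normg0 n g < 1 := by
    rw [hr, div_lt_one (by positivity), Real.sqrt_lt' (by positivity)]; linarith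
  -- `Aplus` unfolds to `arcosh` of the corner entry.
  simp only [Aplus, Hiw, hG0, hGl]
  exact ⟨sub_nonneg.2 (log_norm_boost_add_le_arcosh t h1),
    arcosh_norm_boost_sub_log_le t h1 hSA hr1⟩

/-- For `g ∈ Sp(n,1)`, `k ∈ K = Sp(n) × Sp(1)` and `t ≥ 0`,
`0 ≤ A⁺(g⁻¹ k exp(tH)) - H(g⁻¹ k exp(tH)) ≤ ((1+|g·0|)/(1-|g·0|)) e^(-2t)`
(here `g⁻¹ = J gᴴ J`). -/
theorem stmt11 (n : ℕ) (hn : 1 ≤ n)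
    (g : Matrix (Fin (n+1)) (Fin (n+1)) (Quaternion ℝ)) (hg : g ∈ SpGrp n)
    (k : Matrix (Fin (n+1)) (Fin (n+1)) (Quaternion ℝ)) (hk : inK n k)
    (t : ℝ) (ht : 0 ≤ t) :
    0 ≤ Aplus n (Jm n * gᴴ * Jm n * k * atm n t) -
        Hiw n (Jm n * gᴴ * Jm n * k * atm n t) ∧
      Aplus n (Jm n * gᴴ * Jm n * k * atm n t) -
          Hiw n (Jm n * gᴴ * Jm n * k * atm n t) ≤
        ((1 + normg0 n g) / (1 - normg0 n g)) * Real.exp (-2 * t) :=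
  stmt11_general n hn g hg k hk t
end
end
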